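/- Let B ⊆ ℝⁿ be a closed ball with n ≥ 1, and let h : ℝⁿ → ℝⁿ be a homeomorphism. Then for any point c ∈ ℝⁿ, the maximum of x ↦ ‖h(x) - c‖ over B is attained at some point of the boundary sphere of B, i.e. max_{x ∈ B} ‖h(x) - c‖ = max_{x ∈ ∂B} ‖h(x) - c‖. -/

import Mathlib

open Metric Set

/-!
The image `h '' B` of the ball is compact, so `‖· - c‖` attains its maximum `r` on it. A maximum
point cannot lie in the interior of `h '' B`: that interior sits inside `closedBall c r`, whose
interior is the open ball, where `‖· - c‖ < r`. Hence the maximum lies on the frontier of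
`h '' B`, which for a homeomorphism is the image of the frontier of `B`, the sphere.
-/

theorem IsMaxOn.isGreatest_image {α β : Type*} [Preorder β] {f : α → β} {s : Set α} {a : α}
    (hf : IsMaxOn f s a) (ha : a ∈ s) : IsGreatest (f '' s) (f a) :=
  ⟨mem_image_of_mem f ha, forall_mem_image.2 hf⟩

theorem IsCompact.exists_mem_frontier_isMaxOn_norm_sub
    {F : Type*} [NormedAddCommGroup F] [NormedSpace ℝ F] [Nontrivial F]
    {S : Set F} (hS : IsCompact S) (hne : S.Nonempty) (c : F) :
    ∃ y ∈ frontier S, IsMaxOn (fun x => ‖x - c‖) S y := by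
  obtain ⟨y, hyS, hmax⟩ :=
    hS.exists_isMaxOn hne (continuous_id.sub continuous_const).norm.continuousOn
  refine ⟨y, ⟨subset_closure hyS, fun hy => ?_⟩, hmax⟩
  have hsub : S ⊆ closedBall c ‖y - c‖ := fun x hx => by
    simpa [dist_eq_norm] using (hmax hx : ‖x - c‖ ≤ ‖y - c‖)
  have hball : y ∈ ball c ‖y - c‖ := interior_closedBall' c _ ▸ interior_mono hsub hy
  simp [dist_eq_norm] at hball

theorem Homeomorph.exists_mem_sphere_isMaxOn_norm_sub
    {E F : Type*} [NormedAddCommGroup E] [NormedSpace ℝ E] [Nontrivial E] [ProperSpace E]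
    [NormedAddCommGroup F] [NormedSpace ℝ F]
    (h : E ≃ₜ F) (x₀ : E) {δ : ℝ} (hδ : 0 ≤ δ) (c : F) :
    ∃ y ∈ sphere x₀ δ, IsMaxOn (fun x => ‖h x - c‖) (closedBall x₀ δ) y := by
  have : Nontrivial F := h.injective.nontrivial
  obtain ⟨z, hz, hmax⟩ :=
    ((isCompact_closedBall x₀ δ).image h.continuous).exists_mem_frontier_isMaxOn_norm_sub
      ((nonempty_closedBall.2 hδ).image h) c
  rw [← h.image_frontier, frontier_closedBall'] at hz
  obtain ⟨y, hy, rfl⟩ := hz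
  exact ⟨y, hy, fun x hx => hmax (mem_image_of_mem h hx)⟩

theorem stmt_12 {n : ℕ} (hn : 1 ≤ n)
    (h : EuclideanSpace ℝ (Fin n) ≃ₜ EuclideanSpace ℝ (Fin n))
    (x₀ c : EuclideanSpace ℝ (Fin n)) (δ : ℝ) (hδ : 0 ≤ δ) :
    (∃ y ∈ Metric.sphere x₀ δ,
      (∀ x ∈ Metric.closedBall x₀ δ, ‖h x - c‖ ≤ ‖h y - c‖)) ∧
    sSup ((fun x => ‖h x - c‖) '' Metric.closedBall x₀ δ) =
      sSup ((fun x => ‖h x - c‖) '' Metric.sphere x₀ δ) := by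
  have : NeZero n := ⟨by omega⟩
  obtain ⟨y, hy, hmax⟩ := h.exists_mem_sphere_isMaxOn_norm_sub x₀ hδ c
  have hyB : y ∈ closedBall x₀ δ := sphere_subset_closedBall hy
  refine ⟨⟨y, hy, fun x hx => hmax hx⟩, ?_⟩
  rw [(hmax.isGreatest_image hyB).csSup_eq,
    ((hmax.on_subset sphere_subset_closedBall).isGreatest_image hy).csSup_eq]
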